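/- Let Φ₁, Φ₂ : ℝ^d ⇒ ℝ^ℓ be cusco maps. Then Φ₁(x) = Φ₂(x) for Lebesgue-almost all x ∈ ℝ^d if and only if m(Φ₁)(x) = m(Φ₂)(x) for all x ∈ ℝ^d. -/

import Mathlib

open MeasureTheory Metric Filter Set Topology

noncomputable section

/-- `ℝ^n` with the Euclidean structure. -/
abbrev Euc (n : ℕ) : Type := EuclideanSpace ℝ (Fin n)

/-- Closed convex hull of a set. -/
def clco {n : ℕ} (A : Set (Euc n)) : Set (Euc n) := closure (convexHull ℝ A)

/-- A function is locally bounded. -/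
def LocBdd {d l : ℕ} (f : Euc d → Euc l) : Prop :=
  ∀ x : Euc d, ∃ δ > (0 : ℝ), ∃ C : ℝ, ∀ y ∈ Metric.ball x δ, ‖f y‖ ≤ C

/-- The Filippov regularization of `f`. -/
def FilippovReg {d l : ℕ} (f : Euc d → Euc l) (x : Euc d) : Set (Euc l) :=
  ⋂ (N : Set (Euc d)) (_ : volume N = 0) (δ : ℝ) (_ : 0 < δ),
    clco (f '' (Metric.ball x δ \ N))

/-- The Krasovskii regularization of `f`. -/
def KrasovskiiReg {d l : ℕ} (f : Euc d → Euc l) (x : Euc d) : Set (Euc l) :=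
  ⋂ (δ : ℝ) (_ : 0 < δ), clco (f '' Metric.ball x δ)

/-- A set-valued map is cusco: upper semicontinuous with nonempty compact convex values. -/
def IsCusco {d l : ℕ} (Φ : Euc d → Set (Euc l)) : Prop :=
  (∀ x : Euc d, ∀ U : Set (Euc l), IsOpen U → Φ x ⊆ U →
      ∃ δ > (0 : ℝ), ∀ y ∈ Metric.ball x δ, Φ y ⊆ U) ∧
  ∀ x : Euc d, (Φ x).Nonempty ∧ IsCompact (Φ x) ∧ Convex ℝ (Φ x)

/-- The "minimal" map `m(Φ)` associated to a set-valued map `Φ`. -/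
def mPhi {d l : ℕ} (Φ : Euc d → Set (Euc l)) (x : Euc d) : Set (Euc l) :=
  ⋂ (N : Set (Euc d)) (_ : volume N = 0) (δ : ℝ) (_ : 0 < δ),
    clco (⋃ a ∈ Metric.ball x δ \ N, Φ a)

/-- A point of approximate continuity of `f`. -/
def ApproxContAt {d l : ℕ} (f : Euc d → Euc l) (x : Euc d) : Prop :=
  ∀ ε > (0 : ℝ),
    Tendsto (fun δ : ℝ =>
        volume {y ∈ Metric.ball x δ | ε ≤ ‖f y - f x‖} / volume (Metric.ball x δ))
      (𝓝[>] 0) (𝓝 0)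

/-- A cusco map is Filippov representable if it is the Filippov regularization
of some locally bounded measurable function. -/
def FilippovRepresentable {d l : ℕ} (Φ : Euc d → Set (Euc l)) : Prop :=
  ∃ f : Euc d → Euc l, Measurable f ∧ LocBdd f ∧ ∀ x, Φ x = FilippovReg f x


/-! Values of `Φ` on a null set are invisible to `m(Φ)`, so maps agreeing almost everywhere
have the same `m`. Conversely, `m(Φ) = Φ` almost everywhere for a cusco `Φ`: upper
semicontinuity and closed convex values give `m(Φ)(x) ⊆ Φ(x)` everywhere, while
`Φ(x) ⊆ m(Φ)(x)` holds for any `Φ` off a null set, since for each set `B` of a countable basis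
almost every point of `{y | Φ(y) ∩ B ≠ ∅}` sees this set with positive measure near it, which
no null set exhausts. -/

open TopologicalSpace

lemma MeasureTheory.ae_forall_nhds_measure_inter_pos {X : Type*} [TopologicalSpace X]
    [HereditarilyLindelofSpace X] [MeasurableSpace X] [OpensMeasurableSpace X]
    (μ : Measure X) (T : Set X) :
    ∀ᵐ x ∂μ, x ∈ T → ∀ U ∈ 𝓝 x, 0 < μ (T ∩ U) := by
  have hnull : μ (T ∩ (μ.restrict T).supportᶜ) = 0 := by
    rw [inter_comm, ← Measure.restrict_apply Measure.isOpen_compl_support.measurableSet]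
    exact Measure.measure_compl_support
  refine measure_mono_null (fun x hx => ?_) hnull
  obtain ⟨hxT, U, hU, hTU⟩ : x ∈ T ∧ ∃ U ∈ 𝓝 x, μ (T ∩ U) = 0 := by simpa using hx
  refine ⟨hxT, (μ.restrict T).notMem_support_iff_exists.2
    ⟨interior U, interior_mem_nhds.2 hU, ?_⟩⟩
  rw [Measure.restrict_apply isOpen_interior.measurableSet, inter_comm]
  exact measure_mono_null (inter_subset_inter_right T interior_subset) hTU

section MinimalMap

variable {d l : ℕ}

lemma clco_mono {n : ℕ} {A B : Set (Euc n)} (h : A ⊆ B) : clco A ⊆ clco B :=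
  closure_mono (convexHull_mono h)

lemma mPhi_subset_clco {Φ : Euc d → Set (Euc l)} {x : Euc d} {N : Set (Euc d)}
    (hN : volume N = 0) {δ : ℝ} (hδ : 0 < δ) :
    mPhi Φ x ⊆ clco (⋃ a ∈ ball x δ \ N, Φ a) :=
  (iInter₂_subset N hN).trans (iInter₂_subset δ hδ)

lemma mPhi_mono_of_ae_subset {Φ Ψ : Euc d → Set (Euc l)} (h : ∀ᵐ x : Euc d, Φ x ⊆ Ψ x)
    (x : Euc d) : mPhi Φ x ⊆ mPhi Ψ x := by
  refine subset_iInter₂ fun N hN => subset_iInter₂ fun δ hδ => ?_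
  refine (mPhi_subset_clco (measure_union_null hN (ae_iff.1 h)) hδ).trans (clco_mono ?_)
  refine iUnion₂_subset fun a ⟨ha, haN⟩ => ?_
  rw [mem_union, not_or, mem_ofPred_eq, not_not] at haN
  exact haN.2.trans (subset_biUnion_of_mem (u := Ψ) ⟨ha, haN.1⟩)

lemma mPhi_subset_self {Φ : Euc d → Set (Euc l)} {x : Euc d}
    (husc : ∀ U : Set (Euc l), IsOpen U → Φ x ⊆ U →
      ∃ δ > (0 : ℝ), ∀ y ∈ ball x δ, Φ y ⊆ U)
    (hclosed : IsClosed (Φ x)) (hconvex : Convex ℝ (Φ x)) :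
    mPhi Φ x ⊆ Φ x := by
  rw [← hclosed.closure_eq, closure_eq_iInter_cthickening]
  refine subset_iInter₂ fun ε hε => ?_
  obtain ⟨δ, hδ, hΦδ⟩ := husc _ isOpen_thickening (self_subset_thickening hε _)
  refine (mPhi_subset_clco measure_empty hδ).trans ?_
  refine (closure_mono ?_).trans (closure_thickening_subset_cthickening ε _)
  exact convexHull_min (iUnion₂_subset fun a ha => hΦδ a ha.1) (hconvex.thickening ε)

lemma ae_subset_mPhi (Φ : Euc d → Set (Euc l)) : ∀ᵐ x : Euc d, Φ x ⊆ mPhi Φ x := by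
  set hits : Set (Euc l) → Set (Euc d) := fun B => {y | (Φ y ∩ B).Nonempty}
  have hpos : ∀ᵐ x : Euc d, ∀ B ∈ countableBasis (Euc l),
      x ∈ hits B → ∀ U ∈ 𝓝 x, 0 < volume (hits B ∩ U) :=
    (ae_ball_iff (countable_countableBasis _)).2 fun B _ =>
      ae_forall_nhds_measure_inter_pos volume (hits B)
  filter_upwards [hpos] with x hx v hv
  refine mem_iInter₂.2 fun N hN => mem_iInter₂.2 fun δ hδ => ?_
  refine closure_mono (subset_convexHull ℝ _) (mem_closure_iff_nhds.2 fun W hW => ?_)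
  obtain ⟨B, hB, hvB, hBW⟩ := (isBasis_countableBasis _).mem_nhds_iff.1 hW
  have hmeas : volume ((hits B ∩ ball x δ) \ N) ≠ 0 := by
    rw [measure_sdiff_null hN]
    exact (hx B hB ⟨v, hv, hvB⟩ _ (ball_mem_nhds x hδ)).ne'
  obtain ⟨a, ⟨⟨w, hwΦ, hwB⟩, ha⟩, haN⟩ := nonempty_of_measure_ne_zero hmeas
  exact ⟨w, hBW hwB, mem_biUnion ⟨ha, haN⟩ hwΦ⟩

lemma IsCusco.ae_mPhi_eq {Φ : Euc d → Set (Euc l)} (hΦ : IsCusco Φ) :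
    ∀ᵐ x : Euc d, mPhi Φ x = Φ x := by
  filter_upwards [ae_subset_mPhi Φ] with x hx
  exact (mPhi_subset_self (hΦ.1 x) (hΦ.2 x).2.1.isClosed (hΦ.2 x).2.2).antisymm hx

end MinimalMap

/-- Lemma on equivalent cusco maps: two cusco maps agree almost everywhere
if and only if their minimal maps `m(Φ₁)` and `m(Φ₂)` agree everywhere. -/
theorem ae_eq_iff_mPhi_eq (d l : ℕ) (Φ₁ Φ₂ : Euc d → Set (Euc l))
    (h₁ : IsCusco Φ₁) (h₂ : IsCusco Φ₂) :
    (∀ᵐ x : Euc d, Φ₁ x = Φ₂ x) ↔ ∀ x : Euc d, mPhi Φ₁ x = mPhi Φ₂ x := by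
  refine ⟨fun h x => ?_, fun h => ?_⟩
  · exact (mPhi_mono_of_ae_subset (h.mono fun _ => le_of_eq) x).antisymm
      (mPhi_mono_of_ae_subset (h.mono fun _ => ge_of_eq) x)
  · filter_upwards [h₁.ae_mPhi_eq, h₂.ae_mPhi_eq] with x hx₁ hx₂
    rw [← hx₁, ← hx₂, h x]
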